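/- arXiv:1703.04554 — 3 statements merged into one kernel-verified Lean document; each statement's English description precedes it below -/
import Mathlib

section
/- Assume additionally that all entries of B are positive and that the u×u matrix M·Pᵀ is irreducible (i.e., for every pair (i,j) there exists an integer n ≥ 1 with ((MPᵀ)^n)_{ij} > 0). Then min_{1≤i≤u} R0^i ≤ ρ(G(M,P,B)) ≤ max_{1≤i≤u} R0^i, where R0^i = (ν_i/((μ_i+ν_i)(μ_i+γ_i+δ_i))) · Σ_{k=1}^{v} β_k p_{ik}. -/
/-!
The next generation matrix `G` is entrywise nonnegative, and the factor
`diag(MᵀS*)⁻¹` exactly cancels the column sums of `diag(S*)·M`, so the `j`-th column sum of `G`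
is `R0^j`. The bounds then hold for every nonnegative matrix: the spectral radius is at most
the `ℓ^∞` operator norm of `Gᵀ`, which is the largest column sum of `G`; and since the row sums
of `(Gᵀ)^k` are at least `(min_j R0^j)^k`, Gelfand's formula gives the lower bound.
-/

open Matrix

/-- Spectral radius of a real matrix: the largest modulus of a complex eigenvalue. -/
noncomputable def specRad {n : Type*} [Fintype n] [DecidableEq n] (A : Matrix n n ℝ) : ℝ :=
  sSup ((fun z : ℂ => ‖z‖) '' spectrum ℂ (A.map (fun x : ℝ => (x : ℂ))))

/-- Next generation matrix
`G(M,P,B) = diag(S*)·M·diag(B)·diag(MᵀS*)⁻¹·Pᵀ·diag(ν)·diag((μ+ν)∘(μ+γ+δ))⁻¹`. -/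
noncomputable def NGM {u v : ℕ} (Sstar ν μ γ δ : Fin u → ℝ) (B : Fin v → ℝ)
    (M P : Matrix (Fin u) (Fin v) ℝ) : Matrix (Fin u) (Fin u) ℝ :=
  Matrix.diagonal Sstar * M * Matrix.diagonal B *
    Matrix.diagonal (fun j => ((Mᵀ *ᵥ Sstar) j)⁻¹) * Pᵀ *
    Matrix.diagonal ν *
    Matrix.diagonal (fun i => ((μ i + ν i) * (μ i + γ i + δ i))⁻¹)

open scoped NNReal

theorem spectrum.ofReal_le_spectralRadius_of_forall_pow_le_norm_pow {A : Type*} [NormedRing A]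
    [NormedAlgebra ℂ A] [CompleteSpace A] {a : A} {c : ℝ} (h : ∀ k : ℕ, c ^ k ≤ ‖a ^ k‖) :
    ENNReal.ofReal c ≤ spectralRadius ℂ a := by
  refine ge_of_tendsto (spectrum.pow_norm_pow_one_div_tendsto_nhds_spectralRadius a) ?_
  filter_upwards [Filter.eventually_ge_atTop 1] with k hk
  refine ENNReal.ofReal_le_ofReal ?_
  rcases lt_or_ge c 0 with hc | hc
  · exact hc.le.trans (by positivity)
  calc c = (c ^ k) ^ (1 / k : ℝ) := by rw [one_div, Real.pow_rpow_inv_natCast hc (by omega)]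
    _ ≤ ‖a ^ k‖ ^ (1 / k : ℝ) := by gcongr; exact h k

namespace Matrix

section LinftyOpNorm

attribute [local instance] Matrix.linftyOpNormedAddCommGroup

variable {m n α : Type*} [Fintype m] [Fintype n] [NormedAddCommGroup α]

theorem sum_norm_le_linfty_opNorm (A : Matrix m n α) (i : m) : ∑ j, ‖A i j‖ ≤ ‖A‖ := by
  have := Finset.le_sup (f := fun i => ∑ j, ‖A i j‖₊) (Finset.mem_univ i)
  rwa [← linfty_opNNNorm_def, ← NNReal.coe_le_coe, NNReal.coe_sum] at this

theorem linfty_opNorm_le_of_sum_norm_le {A : Matrix m n α} {R : ℝ} (hR : 0 ≤ R)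
    (h : ∀ i, ∑ j, ‖A i j‖ ≤ R) : ‖A‖ ≤ R := by
  lift R to ℝ≥0 using hR
  rw [linfty_opNorm_def, NNReal.coe_le_coe, Finset.sup_le_iff]
  exact fun i _ => by rw [← NNReal.coe_le_coe, NNReal.coe_sum]; exact h i

end LinftyOpNorm

variable {l m n R : Type*}

theorem spectrum_transpose [Fintype n] [DecidableEq n] [Field R] (A : Matrix n n R) :
    spectrum R Aᵀ = spectrum R A := by
  ext r
  simp only [mem_spectrum_iff_isRoot_charpoly, charpoly_transpose]

section Nonneg

variable [CommSemiring R] [PartialOrder R]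

theorem mul_apply_nonneg [Fintype m] [IsOrderedRing R] {A : Matrix l m R} {B : Matrix m n R}
    (hA : ∀ i j, 0 ≤ A i j) (hB : ∀ i j, 0 ≤ B i j) (i : l) (j : n) : 0 ≤ (A * B) i j :=
  Finset.sum_nonneg fun k _ => mul_nonneg (hA i k) (hB k j)

theorem diagonal_apply_nonneg [DecidableEq n] {d : n → R} (hd : ∀ i, 0 ≤ d i) (i j : n) :
    0 ≤ diagonal d i j := by
  by_cases h : i = j
  · simpa [h] using hd j
  · simp [h]

end Nonneg

theorem pow_le_sum_pow_apply [Fintype n] [DecidableEq n] {A : Matrix n n ℝ} {c : ℝ}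
    (hA : ∀ i j, 0 ≤ A i j) (hc0 : 0 ≤ c) (hc : ∀ i, c ≤ ∑ j, A i j) (k : ℕ) (i : n) :
    c ^ k ≤ ∑ j, (A ^ k) i j := by
  induction k generalizing i with
  | zero => simp [one_apply]
  | succ k ih =>
    calc c ^ (k + 1) = c ^ k * c := pow_succ c k
      _ ≤ c ^ k * ∑ l, A i l := by gcongr; exact hc i
      _ ≤ ∑ l, A i l * ∑ j, (A ^ k) l j := by
        rw [Finset.mul_sum]
        exact Finset.sum_le_sum fun l _ => by rw [mul_comm]; gcongr; exacts [hA i l, ih l]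
      _ = ∑ j, (A ^ (k + 1)) i j := by
        simp only [pow_succ', mul_apply, Finset.mul_sum]
        exact Finset.sum_comm

end Matrix

section SpecRad

variable {n : Type*} [Fintype n] [DecidableEq n]

theorem specRad_nonneg (A : Matrix n n ℝ) : 0 ≤ specRad A :=
  Real.sSup_nonneg fun _ ⟨z, _, hz⟩ => hz ▸ norm_nonneg z

theorem norm_le_specRad_of_mem_spectrum (A : Matrix n n ℝ) {z : ℂ}
    (hz : z ∈ spectrum ℂ (A.map ((↑) : ℝ → ℂ))) : ‖z‖ ≤ specRad A :=
  le_csSup ((finite_spectrum _).image _).bddAbove ⟨z, hz, rfl⟩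

theorem specRad_le_of_forall_norm_le {A : Matrix n n ℝ} {R : ℝ} (hR : 0 ≤ R)
    (h : ∀ z ∈ spectrum ℂ (A.map ((↑) : ℝ → ℂ)), ‖z‖ ≤ R) : specRad A ≤ R :=
  Real.sSup_le (by rintro _ ⟨z, hz, rfl⟩; exact h z hz) hR

theorem specRad_transpose (A : Matrix n n ℝ) : specRad Aᵀ = specRad A := by
  rw [specRad, specRad, transpose_map, spectrum_transpose]

attribute [local instance] Matrix.linftyOpNormedRing Matrix.linftyOpNormedAlgebra

variable [Nonempty n]

theorem le_specRad_of_le_sum {A : Matrix n n ℝ} {c : ℝ} (hA : ∀ i j, 0 ≤ A i j)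
    (hc : ∀ i, c ≤ ∑ j, A i j) : c ≤ specRad A := by
  rcases le_or_gt c 0 with hc0 | hc0
  · exact hc0.trans (specRad_nonneg A)
  obtain ⟨z, hz, hzA⟩ := spectrum.exists_nnnorm_eq_spectralRadius (A.map ((↑) : ℝ → ℂ))
  refine le_trans ?_ (norm_le_specRad_of_mem_spectrum A hz)
  have hcz : ENNReal.ofReal c ≤ ‖z‖₊ :=
    hzA ▸ spectrum.ofReal_le_spectralRadius_of_forall_pow_le_norm_pow fun k => by
      let i := Classical.arbitrary n
      have hpow : A.map ((↑) : ℝ → ℂ) ^ k = (A ^ k).map (↑) :=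
        (map_pow Complex.ofRealHom.mapMatrix A k).symm
      calc c ^ k ≤ ∑ j, (A ^ k) i j := pow_le_sum_pow_apply hA hc0.le hc k i
        _ ≤ ∑ j, ‖(A.map ((↑) : ℝ → ℂ) ^ k) i j‖ := by
          rw [hpow]
          exact Finset.sum_le_sum fun j _ => by simp [le_abs_self]
        _ ≤ ‖A.map ((↑) : ℝ → ℂ) ^ k‖ := sum_norm_le_linfty_opNorm _ i
  rwa [← ENNReal.ofReal_coe_nnreal, coe_nnnorm, ENNReal.ofReal_le_ofReal_iff (norm_nonneg z)]
    at hcz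

theorem specRad_le_of_sum_le {A : Matrix n n ℝ} {R : ℝ} (hA : ∀ i j, 0 ≤ A i j)
    (hR : ∀ i, ∑ j, A i j ≤ R) : specRad A ≤ R := by
  have hR0 : 0 ≤ R := (Finset.sum_nonneg fun j _ => hA _ j).trans (hR (Classical.arbitrary n))
  refine specRad_le_of_forall_norm_le hR0 fun z hz =>
    (spectrum.norm_le_norm_of_mem hz).trans (linfty_opNorm_le_of_sum_norm_le hR0 fun i => ?_)
  simpa [abs_of_nonneg (hA i _)] using hR i

end SpecRad

section NGM

variable {u v : ℕ} {Sstar ν μ γ δ : Fin u → ℝ} {B : Fin v → ℝ} {M P : Matrix (Fin u) (Fin v) ℝ}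

theorem NGM_nonneg (hS : ∀ i, 0 ≤ Sstar i) (hν : ∀ i, 0 ≤ ν i)
    (hd : ∀ i, 0 ≤ (μ i + ν i) * (μ i + γ i + δ i)) (hB : ∀ k, 0 ≤ B k)
    (hM : ∀ i k, 0 ≤ M i k) (hP : ∀ i k, 0 ≤ P i k) (hMS : ∀ k, 0 ≤ (Mᵀ *ᵥ Sstar) k) :
    ∀ i j, 0 ≤ NGM Sstar ν μ γ δ B M P i j :=
  mul_apply_nonneg (mul_apply_nonneg (mul_apply_nonneg (mul_apply_nonneg
    (mul_apply_nonneg (mul_apply_nonneg (diagonal_apply_nonneg hS) hM)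
      (diagonal_apply_nonneg hB))
    (diagonal_apply_nonneg fun k => inv_nonneg.mpr (hMS k))) fun i k => hP k i)
    (diagonal_apply_nonneg hν)) (diagonal_apply_nonneg fun i => inv_nonneg.mpr (hd i))

theorem sum_NGM_apply (hMS : ∀ k, (Mᵀ *ᵥ Sstar) k ≠ 0) (j : Fin u) :
    ∑ i, NGM Sstar ν μ γ δ B M P i j =
      ν j / ((μ j + ν j) * (μ j + γ j + δ j)) * ∑ k, B k * P j k := by
  have hS : (1 : Fin u → ℝ) ᵥ* diagonal Sstar = Sstar := by ext; simp [vecMul_diagonal]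
  have hB : Sstar ᵥ* M ᵥ* diagonal B ᵥ* diagonal (fun k => ((Mᵀ *ᵥ Sstar) k)⁻¹) = B := by
    ext k
    rw [vecMul_diagonal, vecMul_diagonal, ← mulVec_transpose]
    field_simp [hMS k]
  calc ∑ i, NGM Sstar ν μ γ δ B M P i j = (1 ᵥ* NGM Sstar ν μ γ δ B M P) j := by
        simp [vecMul, dotProduct]
    _ = _ := by
      simp only [NGM, ← vecMul_vecMul]
      rw [hS, hB, vecMul_transpose]
      simp only [vecMul_diagonal, mulVec, dotProduct, mul_comm (P j _)]
      ring

end NGM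

theorem stmt4_general (u v : ℕ) (hu : 1 ≤ u)
    (Λ μ ν γ δ : Fin u → ℝ)
    (hΛ : ∀ i, 0 < Λ i) (hμ : ∀ i, 0 < μ i) (hν : ∀ i, 0 < ν i) (hγ : ∀ i, 0 < γ i)
    (hδ : ∀ i, 0 ≤ δ i)
    (B : Fin v → ℝ) (hB : ∀ j, 0 ≤ B j)
    (M P : Matrix (Fin u) (Fin v) ℝ)
    (hM : ∀ i j, 0 ≤ M i j) (hP : ∀ i j, 0 ≤ P i j)
    (Sstar : Fin u → ℝ) (hSstar : ∀ i, Sstar i = Λ i / μ i)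
    (hMS : ∀ j, 0 < (Mᵀ *ᵥ Sstar) j) :
    (⨅ i : Fin u, ν i / ((μ i + ν i) * (μ i + γ i + δ i)) * ∑ k : Fin v, B k * P i k) ≤
        specRad (NGM Sstar ν μ γ δ B M P) ∧
      specRad (NGM Sstar ν μ γ δ B M P) ≤
        ⨆ i : Fin u, ν i / ((μ i + ν i) * (μ i + γ i + δ i)) * ∑ k : Fin v, B k * P i k := by
  have : Nonempty (Fin u) := ⟨⟨0, hu⟩⟩
  set R0 : Fin u → ℝ := fun i => ν i / ((μ i + ν i) * (μ i + γ i + δ i)) * ∑ k, B k * P i k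
  set G := NGM Sstar ν μ γ δ B M P
  have hS (i : Fin u) : 0 ≤ Sstar i := hSstar i ▸ (div_pos (hΛ i) (hμ i)).le
  have hd (i : Fin u) : 0 ≤ (μ i + ν i) * (μ i + γ i + δ i) := by
    have := hμ i; have := hν i; have := hγ i; have := hδ i
    positivity
  have hGT : ∀ i j, 0 ≤ Gᵀ i j := fun i j =>
    NGM_nonneg hS (fun i => (hν i).le) hd hB hM hP (fun k => (hMS k).le) j i
  have hrow (i : Fin u) : ∑ j, Gᵀ i j = R0 i := sum_NGM_apply (fun k => (hMS k).ne') i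
  rw [← specRad_transpose]
  constructor
  · exact le_specRad_of_le_sum hGT fun i => hrow i ▸ ciInf_le (Finite.bddBelow_range R0) i
  · exact specRad_le_of_sum_le hGT fun i => hrow i ▸ le_ciSup (Finite.bddAbove_range R0) i

/-- under positivity of `B` and irreducibility of `M·Pᵀ`, the basic
reproduction number lies between the minimal and maximal group reproduction
numbers `R0^i`. -/
theorem stmt4 (u v : ℕ) (hu : 1 ≤ u) (hv : 1 ≤ v)
    (Λ μ ν γ δ η : Fin u → ℝ)
    (hΛ : ∀ i, 0 < Λ i) (hμ : ∀ i, 0 < μ i) (hν : ∀ i, 0 < ν i) (hγ : ∀ i, 0 < γ i)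
    (hδ : ∀ i, 0 ≤ δ i) (hη : ∀ i, 0 ≤ η i)
    (B : Fin v → ℝ) (hB : ∀ j, 0 ≤ B j)
    (M P : Matrix (Fin u) (Fin v) ℝ)
    (hM : ∀ i j, 0 ≤ M i j) (hP : ∀ i j, 0 ≤ P i j)
    (Sstar : Fin u → ℝ) (hSstar : ∀ i, Sstar i = Λ i / μ i)
    (hMS : ∀ j, 0 < (Mᵀ *ᵥ Sstar) j)
    (hBpos : ∀ j, 0 < B j)
    (hirr : ∀ i j : Fin u, ∃ n : ℕ, 1 ≤ n ∧ 0 < ((M * Pᵀ) ^ n) i j) :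
    (⨅ i : Fin u, ν i / ((μ i + ν i) * (μ i + γ i + δ i)) * ∑ k : Fin v, B k * P i k) ≤
        specRad (NGM Sstar ν μ γ δ B M P) ∧
      specRad (NGM Sstar ν μ γ δ B M P) ≤
        ⨆ i : Fin u, ν i / ((μ i + ν i) * (μ i + γ i + δ i)) * ∑ k : Fin v, B k * P i k :=
  stmt4_general u v hu Λ μ ν γ δ hΛ hμ hν hγ hδ B hB M P hM hP Sstar hSstar hMS
end

section
/- Fix the number of groups u and let v ≥ v' ≥ 1. Let M, P ∈ ℝ^{u×v} be nonnegative matrices with (MᵀS*)_j > 0 for every j ≤ v, and let M', P' ∈ ℝ^{u×v'} be the submatrices consisting of their first v' columns, with B' ∈ ℝ^{v'} the first v' entries of B. Then the basic reproduction number is nondecreasing in the number of patches: ρ(G(M',P',B')) ≤ ρ(G(M,P,B)). -/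
open Matrix

/-! Dropping patches only drops terms: every entry of `G` is a sum over patches of nonnegative
terms, and the normalisation `(MᵀS*)_j` of a kept patch `j` involves column `j` alone. So the
restricted matrix is entrywise below the full one, and the spectral radius is monotone on
nonnegative matrices, since by Gelfand's formula it is `lim ‖Aᵏ‖^(1/k)` and the `ℓ∞` operator
norm of `Aᵏ` is monotone in the entries of `A`. -/

open scoped ENNReal

namespace spectrum

variable {A : Type*} [NormedRing A] [NormedAlgebra ℂ A] [CompleteSpace A]

lemma sSup_norm_spectrum_eq_toReal_spectralRadius (a : A) :
    sSup ((fun z : ℂ => ‖z‖) '' spectrum ℂ a) = (spectralRadius ℂ a).toReal := by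
  rcases (spectrum ℂ a).eq_empty_or_nonempty with h | h
  · simp [h, spectralRadius]
  obtain ⟨k, hk, hk_eq⟩ := exists_nnnorm_eq_spectralRadius_of_nonempty h
  rw [← hk_eq]
  refine IsGreatest.csSup_eq ⟨⟨k, hk, rfl⟩, ?_⟩
  rintro _ ⟨z, hz, rfl⟩
  have : (‖z‖₊ : ℝ≥0∞) ≤ ‖k‖₊ :=
    hk_eq ▸ le_iSup₂ (f := fun z (_ : z ∈ spectrum ℂ a) => (‖z‖₊ : ℝ≥0∞)) z hz
  exact_mod_cast this

lemma spectralRadius_lt_top (a : A) : spectralRadius ℂ a < ⊤ := by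
  refine lt_of_le_of_lt (iSup₂_le fun k hk => ?_) (ENNReal.coe_lt_top (r := ‖a‖₊ * ‖(1 : A)‖₊))
  exact ENNReal.coe_le_coe.2 (norm_le_norm_mul_of_mem hk)

lemma spectralRadius_le_of_forall_nnnorm_pow_le {a b : A} (h : ∀ k : ℕ, ‖a ^ k‖₊ ≤ ‖b ^ k‖₊) :
    spectralRadius ℂ a ≤ spectralRadius ℂ b :=
  le_of_tendsto_of_tendsto' (pow_nnnorm_pow_one_div_tendsto_nhds_spectralRadius a)
    (pow_nnnorm_pow_one_div_tendsto_nhds_spectralRadius b)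
    fun k => ENNReal.rpow_le_rpow (by exact_mod_cast h k) (by positivity)

end spectrum

namespace Matrix

variable {n : Type*} [Fintype n]

section Entrywise

variable [DecidableEq n] {R : Type*} [Semiring R] [PartialOrder R] [IsOrderedRing R]

lemma pow_apply_le_pow_apply {A B : Matrix n n R} (hA : ∀ i j, 0 ≤ A i j)
    (hAB : ∀ i j, A i j ≤ B i j) (k : ℕ) (i j : n) : (A ^ k) i j ≤ (B ^ k) i j := by
  induction k generalizing j with
  | zero => rfl
  | succ k ih =>
    simp only [pow_succ, mul_apply]
    exact Finset.sum_le_sum fun l _ => mul_le_mul (ih l) (hAB l j) (hA l j)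
      ((pow_apply_nonneg hA k i l).trans (ih l))

end Entrywise

attribute [local instance] Matrix.linftyOpSeminormedAddCommGroup Matrix.linftyOpNormedRing
  Matrix.linftyOpNormedAlgebra

lemma linfty_opNNNorm_mono {α : Type*} [SeminormedAddCommGroup α] {A B : Matrix n n α}
    (h : ∀ i j, ‖A i j‖₊ ≤ ‖B i j‖₊) : ‖A‖₊ ≤ ‖B‖₊ := by
  rw [linfty_opNNNorm_def, linfty_opNNNorm_def]
  exact Finset.sup_mono_fun fun i _ => Finset.sum_le_sum fun j _ => h i j

variable [DecidableEq n]

lemma specRad_eq_toReal_spectralRadius (A : Matrix n n ℝ) :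
    specRad A = (spectralRadius ℂ (A.map (fun x : ℝ => (x : ℂ)))).toReal :=
  spectrum.sSup_norm_spectrum_eq_toReal_spectralRadius _

theorem specRad_mono {A B : Matrix n n ℝ} (hA : ∀ i j, 0 ≤ A i j)
    (hAB : ∀ i j, A i j ≤ B i j) : specRad A ≤ specRad B := by
  have hpow : ∀ k : ℕ,
      ‖A.map (fun x : ℝ => (x : ℂ)) ^ k‖₊ ≤ ‖B.map (fun x : ℝ => (x : ℂ)) ^ k‖₊ := by
    intro k
    have hmap : ∀ C : Matrix n n ℝ,
        C.map (fun x : ℝ => (x : ℂ)) ^ k = (C ^ k).map (fun x : ℝ => (x : ℂ)) :=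
      fun C => (C.map_pow Complex.ofRealHom k).symm
    rw [hmap, hmap]
    refine linfty_opNNNorm_mono fun i j => ?_
    have h0 := pow_apply_nonneg hA k i j
    have hle := pow_apply_le_pow_apply hA hAB k i j
    simp only [map_apply, Complex.nnnorm_real,
      Real.nnnorm_of_nonneg h0, Real.nnnorm_of_nonneg (h0.trans hle)]
    exact hle
  rw [specRad_eq_toReal_spectralRadius, specRad_eq_toReal_spectralRadius]
  exact ENNReal.toReal_mono (spectrum.spectralRadius_lt_top _).ne
    (spectrum.spectralRadius_le_of_forall_nnnorm_pow_le hpow)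

end Matrix

lemma Fintype.sum_comp_le_sum_of_injective {ι κ M : Type*} [Fintype ι] [Fintype κ]
    [AddCommMonoid M] [PartialOrder M] [IsOrderedAddMonoid M] {e : ι → κ}
    (he : Function.Injective e) {f : κ → M} (hf : ∀ j, 0 ≤ f j) :
    ∑ i, f (e i) ≤ ∑ j, f j := by
  classical
  rw [← Finset.sum_image he.injOn]
  exact Finset.sum_le_sum_of_subset_of_nonneg (Finset.subset_univ _) fun j _ _ => hf j

section NGM

variable {u v v' : ℕ} {S ν μ γ δ : Fin u → ℝ} {B : Fin v → ℝ} {M P : Matrix (Fin u) (Fin v) ℝ}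

lemma NGM_apply (i k : Fin u) :
    NGM S ν μ γ δ B M P i k =
      (∑ j, S i * M i j * B j * ((Mᵀ *ᵥ S) j)⁻¹ * P k j) *
        (ν k * ((μ k + ν k) * (μ k + γ k + δ k))⁻¹) := by
  rw [NGM, mul_diagonal, mul_diagonal, mul_apply]
  simp only [mul_diagonal, diagonal_mul, transpose_apply]
  ring

lemma NGM_submatrix_apply (e : Fin v' → Fin v) (i k : Fin u) :
    NGM S ν μ γ δ (fun j => B (e j)) (M.submatrix id e) (P.submatrix id e) i k =
      (∑ j, S i * M i (e j) * B (e j) * ((Mᵀ *ᵥ S) (e j))⁻¹ * P k (e j)) *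
        (ν k * ((μ k + ν k) * (μ k + γ k + δ k))⁻¹) := by
  rw [NGM_apply]
  simp [mulVec, dotProduct]

lemma NGM_summand_nonneg (hS : ∀ i, 0 ≤ S i) (hB : ∀ j, 0 ≤ B j) (hM : ∀ i j, 0 ≤ M i j)
    (hP : ∀ i j, 0 ≤ P i j) (i k : Fin u) (j : Fin v) :
    0 ≤ S i * M i j * B j * ((Mᵀ *ᵥ S) j)⁻¹ * P k j := by
  have hMS : 0 ≤ (Mᵀ *ᵥ S) j := dotProduct_nonneg_of_nonneg (fun l => hM l j) hS
  have := hS i; have := hM i j; have := hB j; have := hP k j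
  positivity

lemma NGM_apply_nonneg (hS : ∀ i, 0 ≤ S i) (hν : ∀ i, 0 ≤ ν i) (hμ : ∀ i, 0 ≤ μ i)
    (hγ : ∀ i, 0 ≤ γ i) (hδ : ∀ i, 0 ≤ δ i) (hB : ∀ j, 0 ≤ B j) (hM : ∀ i j, 0 ≤ M i j)
    (hP : ∀ i j, 0 ≤ P i j) (i k : Fin u) : 0 ≤ NGM S ν μ γ δ B M P i k := by
  have := hν k; have := hμ k; have := hγ k; have := hδ k
  rw [NGM_apply]
  exact mul_nonneg (Finset.sum_nonneg fun j _ => NGM_summand_nonneg hS hB hM hP i k j)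
    (by positivity)

lemma NGM_submatrix_apply_le {e : Fin v' → Fin v} (he : Function.Injective e)
    (hS : ∀ i, 0 ≤ S i) (hν : ∀ i, 0 ≤ ν i) (hμ : ∀ i, 0 ≤ μ i)
    (hγ : ∀ i, 0 ≤ γ i) (hδ : ∀ i, 0 ≤ δ i) (hB : ∀ j, 0 ≤ B j) (hM : ∀ i j, 0 ≤ M i j)
    (hP : ∀ i j, 0 ≤ P i j) (i k : Fin u) :
    NGM S ν μ γ δ (fun j => B (e j)) (M.submatrix id e) (P.submatrix id e) i k ≤
      NGM S ν μ γ δ B M P i k := by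
  have := hν k; have := hμ k; have := hγ k; have := hδ k
  rw [NGM_submatrix_apply, NGM_apply]
  exact mul_le_mul_of_nonneg_right
    (Fintype.sum_comp_le_sum_of_injective he (NGM_summand_nonneg hS hB hM hP i k))
    (by positivity)

end NGM

theorem stmt6_general (u v v' : ℕ) (hvv' : v' ≤ v)
    (Λ μ ν γ δ : Fin u → ℝ)
    (hΛ : ∀ i, 0 < Λ i) (hμ : ∀ i, 0 < μ i) (hν : ∀ i, 0 < ν i) (hγ : ∀ i, 0 < γ i)
    (hδ : ∀ i, 0 ≤ δ i)
    (B : Fin v → ℝ) (hB : ∀ j, 0 ≤ B j)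
    (M P : Matrix (Fin u) (Fin v) ℝ)
    (hM : ∀ i j, 0 ≤ M i j) (hP : ∀ i j, 0 ≤ P i j)
    (Sstar : Fin u → ℝ) (hSstar : ∀ i, Sstar i = Λ i / μ i)
    :
    specRad (NGM Sstar ν μ γ δ (fun j => B (Fin.castLE hvv' j))
        (M.submatrix id (Fin.castLE hvv')) (P.submatrix id (Fin.castLE hvv'))) ≤
      specRad (NGM Sstar ν μ γ δ B M P) := by
  have hS : ∀ i, 0 ≤ Sstar i := fun i => hSstar i ▸ div_nonneg (hΛ i).le (hμ i).le
  have hν' : ∀ i, 0 ≤ ν i := fun i => (hν i).le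
  have hμ' : ∀ i, 0 ≤ μ i := fun i => (hμ i).le
  have hγ' : ∀ i, 0 ≤ γ i := fun i => (hγ i).le
  exact Matrix.specRad_mono
    (NGM_apply_nonneg hS hν' hμ' hγ' hδ (fun j => hB _) (fun i j => hM i _) (fun i j => hP i _))
    (NGM_submatrix_apply_le (Fin.castLE_injective hvv') hS hν' hμ' hγ' hδ hB hM hP)

/-- for a fixed number of groups, the basic reproduction number is
nondecreasing in the number of patches: restricting to the first `v'` of `v`
patches cannot increase it. -/
theorem stmt6 (u v v' : ℕ) (hu : 1 ≤ u) (hv' : 1 ≤ v') (hvv' : v' ≤ v)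
    (Λ μ ν γ δ η : Fin u → ℝ)
    (hΛ : ∀ i, 0 < Λ i) (hμ : ∀ i, 0 < μ i) (hν : ∀ i, 0 < ν i) (hγ : ∀ i, 0 < γ i)
    (hδ : ∀ i, 0 ≤ δ i) (hη : ∀ i, 0 ≤ η i)
    (B : Fin v → ℝ) (hB : ∀ j, 0 ≤ B j)
    (M P : Matrix (Fin u) (Fin v) ℝ)
    (hM : ∀ i j, 0 ≤ M i j) (hP : ∀ i j, 0 ≤ P i j)
    (Sstar : Fin u → ℝ) (hSstar : ∀ i, Sstar i = Λ i / μ i)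
    (hMS : ∀ j, 0 < (Mᵀ *ᵥ Sstar) j)
    :
    specRad (NGM Sstar ν μ γ δ (fun j => B (Fin.castLE hvv' j))
        (M.submatrix id (Fin.castLE hvv')) (P.submatrix id (Fin.castLE hvv'))) ≤
      specRad (NGM Sstar ν μ γ δ B M P) :=
  stmt6_general u v v' hvv' Λ μ ν γ δ hΛ hμ hν hγ hδ B hB M P hM hP Sstar hSstar
end

section
/- Suppose the infected residence-time matrix has rank one in the form P = α·pᵀ, where α ∈ ℝ^u and p ∈ ℝ^v have nonnegative entries. Then the basic reproduction number is given explicitly by ρ(G(M,P,B)) = ⟨S*∘α, diag(ν)·diag((μ+ν)∘(μ+γ+δ))⁻¹·M·diag(MᵀS*)⁻¹·(B∘p)⟩, where ⟨·,·⟩ is the Euclidean inner product on ℝ^u and ∘ the componentwise product. -/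
/-!
When `P = α pᵀ` the next generation matrix is itself of rank one, `G = w zᵀ`. The characteristic
polynomial of `w zᵀ` is `X ^ n - (w ⬝ᵥ z) X ^ (n - 1)`, so its only possible nonzero eigenvalue is
`w ⬝ᵥ z` and the spectral radius is `|w ⬝ᵥ z|`. Expanding `w ⬝ᵥ z` gives the stated inner product,
which is nonnegative because all the data are.
-/

open Matrix

namespace Matrix

variable {n : Type*}

theorem mem_spectrum_vecMulVec_iff [Fintype n] [DecidableEq n] {K : Type*} [Field K]
    (u v : n → K) {r : K} (hr : r ≠ 0) :
    r ∈ spectrum K (vecMulVec u v) ↔ r = u ⬝ᵥ v := by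
  rw [mem_spectrum_iff_isRoot_charpoly, charpoly_vecMulVec, Polynomial.IsRoot.def]
  simp only [Polynomial.eval_sub, Polynomial.eval_pow, Polynomial.eval_X, Polynomial.eval_smul,
    smul_eq_mul]
  cases h : Fintype.card n with
  | zero =>
    have : IsEmpty n := Fintype.card_eq_zero_iff.mp h
    simp [dotProduct, hr]
  | succ k =>
    rw [Nat.add_sub_cancel, pow_succ, mul_comm (u ⬝ᵥ v), ← mul_sub, mul_eq_zero, sub_eq_zero]
    simp [hr]

theorem map_ofReal_vecMulVec (u v : n → ℝ) :
    (vecMulVec u v).map ((↑) : ℝ → ℂ) = vecMulVec (fun i => (u i : ℂ)) (fun i => (v i : ℂ)) := by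
  ext i j
  simp [vecMulVec_apply]

end Matrix

theorem specRad_vecMulVec {n : Type*} [Fintype n] [DecidableEq n] (u v : n → ℝ) :
    specRad (vecMulVec u v) = |u ⬝ᵥ v| := by
  set t := u ⬝ᵥ v
  have htC : (fun i => (u i : ℂ)) ⬝ᵥ (fun i => (v i : ℂ)) = t := by
    simp [t, dotProduct]
  have hle : ∀ y ∈ (fun z : ℂ => ‖z‖) '' spectrum ℂ ((vecMulVec u v).map ((↑) : ℝ → ℂ)),
      y ≤ |t| := by
    rintro _ ⟨r, hr, rfl⟩
    rw [map_ofReal_vecMulVec] at hr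
    by_cases hr0 : r = 0
    · simp [hr0]
    · rw [mem_spectrum_vecMulVec_iff _ _ hr0, htC] at hr
      simp [hr]
  refine le_antisymm (Real.sSup_le hle (abs_nonneg t)) ?_
  by_cases ht : t = 0
  · rw [ht, abs_zero]
    exact Real.sSup_nonneg (by rintro _ ⟨r, -, rfl⟩; exact norm_nonneg r)
  · refine le_csSup ⟨|t|, hle⟩ ⟨t, ?_, by simp⟩
    rw [map_ofReal_vecMulVec, mem_spectrum_vecMulVec_iff _ _ (by exact_mod_cast ht), htC]

theorem NGM_vecMulVec {u v : ℕ} (Sstar ν μ γ δ : Fin u → ℝ) (B : Fin v → ℝ)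
    (M : Matrix (Fin u) (Fin v) ℝ) (α : Fin u → ℝ) (p : Fin v → ℝ) :
    NGM Sstar ν μ γ δ B M (vecMulVec α p) =
      vecMulVec (fun i => Sstar i * (M *ᵥ fun j => ((Mᵀ *ᵥ Sstar) j)⁻¹ * (B j * p j)) i)
        (fun i => α i * (ν i * ((μ i + ν i) * (μ i + γ i + δ i))⁻¹)) := by
  rw [NGM, transpose_vecMulVec, mul_vecMulVec, vecMulVec_mul, vecMulVec_mul]
  congr 1
  · ext i
    simp only [← mulVec_mulVec, mulVec_diagonal]
    congr 2
    ext j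
    simp only [mulVec_diagonal]
    ring
  · ext i
    simp [vecMul_diagonal, mul_assoc]

theorem specRad_NGM_vecMulVec {u v : ℕ} (Sstar ν μ γ δ : Fin u → ℝ) (B : Fin v → ℝ)
    (M : Matrix (Fin u) (Fin v) ℝ) (α : Fin u → ℝ) (p : Fin v → ℝ) :
    specRad (NGM Sstar ν μ γ δ B M (vecMulVec α p)) =
      |(fun i => Sstar i * α i) ⬝ᵥ
        (fun i => ν i * ((μ i + ν i) * (μ i + γ i + δ i))⁻¹ *
          (M *ᵥ fun j => ((Mᵀ *ᵥ Sstar) j)⁻¹ * (B j * p j)) i)| := by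
  rw [NGM_vecMulVec, specRad_vecMulVec]
  congr 1
  exact Finset.sum_congr rfl fun i _ => by ring

theorem stmt9_general (u v : ℕ)
    (Λ μ ν γ δ : Fin u → ℝ)
    (hΛ : ∀ i, 0 < Λ i) (hμ : ∀ i, 0 < μ i) (hν : ∀ i, 0 < ν i) (hγ : ∀ i, 0 < γ i)
    (hδ : ∀ i, 0 ≤ δ i)
    (B : Fin v → ℝ) (hB : ∀ j, 0 ≤ B j)
    (M P : Matrix (Fin u) (Fin v) ℝ)
    (hM : ∀ i j, 0 ≤ M i j)
    (Sstar : Fin u → ℝ) (hSstar : ∀ i, Sstar i = Λ i / μ i)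
    (hMS : ∀ j, 0 < (Mᵀ *ᵥ Sstar) j)
    (α : Fin u → ℝ) (p : Fin v → ℝ) (hα : ∀ i, 0 ≤ α i) (hp : ∀ j, 0 ≤ p j)
    (hPrank1 : P = Matrix.of fun i j => α i * p j) :
    specRad (NGM Sstar ν μ γ δ B M P) =
      (fun i => Sstar i * α i) ⬝ᵥ
        (fun i => ν i * ((μ i + ν i) * (μ i + γ i + δ i))⁻¹ *
          (M *ᵥ fun j => ((Mᵀ *ᵥ Sstar) j)⁻¹ * (B j * p j)) i) := by
  have hSstar_nonneg : ∀ i, 0 ≤ Sstar i := fun i => by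
    rw [hSstar i]
    exact (div_pos (hΛ i) (hμ i)).le
  have hMv_nonneg : ∀ i, 0 ≤ (M *ᵥ fun j => ((Mᵀ *ᵥ Sstar) j)⁻¹ * (B j * p j)) i := fun i =>
    dotProduct_nonneg_of_nonneg (hM i) fun j => by
      have := hMS j; have := hB j; have := hp j
      positivity
  rw [hPrank1]
  refine (specRad_NGM_vecMulVec Sstar ν μ γ δ B M α p).trans (abs_of_nonneg ?_)
  refine dotProduct_nonneg_of_nonneg (fun i => mul_nonneg (hSstar_nonneg i) (hα i)) fun i => ?_
  have := hμ i; have := hν i; have := hγ i; have := hδ i; have := hMv_nonneg i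
  positivity

/-- explicit formula for the basic reproduction number when the
infected residence-time matrix is of rank one, `P = α·pᵀ` with `α, p ≥ 0`:
`ρ(G) = ⟨S*∘α, diag(ν)·diag((μ+ν)∘(μ+γ+δ))⁻¹·M·diag(MᵀS*)⁻¹·(B∘p)⟩`. -/
theorem stmt9 (u v : ℕ) (hu : 1 ≤ u) (hv : 1 ≤ v)
    (Λ μ ν γ δ η : Fin u → ℝ)
    (hΛ : ∀ i, 0 < Λ i) (hμ : ∀ i, 0 < μ i) (hν : ∀ i, 0 < ν i) (hγ : ∀ i, 0 < γ i)
    (hδ : ∀ i, 0 ≤ δ i) (hη : ∀ i, 0 ≤ η i)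
    (B : Fin v → ℝ) (hB : ∀ j, 0 ≤ B j)
    (M P : Matrix (Fin u) (Fin v) ℝ)
    (hM : ∀ i j, 0 ≤ M i j) (hP : ∀ i j, 0 ≤ P i j)
    (Sstar : Fin u → ℝ) (hSstar : ∀ i, Sstar i = Λ i / μ i)
    (hMS : ∀ j, 0 < (Mᵀ *ᵥ Sstar) j)
    (α : Fin u → ℝ) (p : Fin v → ℝ) (hα : ∀ i, 0 ≤ α i) (hp : ∀ j, 0 ≤ p j)
    (hPrank1 : P = Matrix.of fun i j => α i * p j) :
    specRad (NGM Sstar ν μ γ δ B M P) =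
      (fun i => Sstar i * α i) ⬝ᵥ
        (fun i => ν i * ((μ i + ν i) * (μ i + γ i + δ i))⁻¹ *
          (M *ᵥ fun j => ((Mᵀ *ᵥ Sstar) j)⁻¹ * (B j * p j)) i) :=
  stmt9_general u v Λ μ ν γ δ hΛ hμ hν hγ hδ B hB M P hM Sstar hSstar hMS α p hα hp hPrank1
end
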